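/- arXiv:1703.01672 — 3 statements merged into one kernel-verified Lean document; each statement's English description precedes it below -/
import Mathlib

section
/- In the noiseless case p = 0, let N be even and let p_1 > p_2 > ⋯ > p_N > 0 be a probability distribution with strictly decreasing probabilities. Then for a subset A ⊆ {1,…,N}, G_A(X) = G_opt(X) if and only if A is a C-partition, i.e., for every i ∈ {1,…,N/2} exactly one of 2i−1, 2i belongs to A. -/
open Finset

noncomputable def guess (N : ℕ) (q : Fin N → ℝ) : ℝ :=
  Finset.univ.inf' ⟨1, Finset.mem_univ 1⟩
    (fun σ : Equiv.Perm (Fin N) => ∑ k : Fin N, ((k : ℝ) + 1) * q (σ k))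

noncomputable def guessA (N : ℕ) (q : Fin N → ℝ) (p : ℝ) (A : Finset (Fin N)) : ℝ :=
  ∑ y : Bool, Finset.univ.inf' ⟨1, Finset.mem_univ 1⟩
    (fun σ : Equiv.Perm (Fin N) => ∑ k : Fin N,
      ((k : ℝ) + 1) * q (σ k) * (if ((σ k ∈ A) ↔ (y = true)) then 1 - p else p))

noncomputable def guessOpt (N : ℕ) (q : Fin N → ℝ) (p : ℝ) : ℝ :=
  Finset.univ.inf' ⟨∅, Finset.mem_univ ∅⟩ (fun A : Finset (Fin N) => guessA N q p A)

def zigzag (N : ℕ) : Finset (Fin N) := Finset.univ.filter (fun k => (k : ℕ) % 2 = 0)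

noncomputable def wt (N : ℕ) (q : Fin N → ℝ) (p : ℝ) (i j : Fin N) : ℝ :=
  max 0 ((1 - p) * min (q i) (q j) - p * max (q i) (q j))

noncomputable def cut (N : ℕ) (q : Fin N → ℝ) (p : ℝ) (A : Finset (Fin N)) : ℝ :=
  ∑ i ∈ A, ∑ j ∈ Aᶜ, wt N q p i j

noncomputable def maxcut (N : ℕ) (q : Fin N → ℝ) (p : ℝ) : ℝ :=
  Finset.univ.sup' ⟨∅, Finset.mem_univ ∅⟩ (fun A : Finset (Fin N) => cut N q p A)

/-!
With `p = 0` only the side of the answer in `{A, Aᶜ}` is left to search, and guessing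
optimally among weights `f` costs `∑ f + ∑_{j < i} min (f i) (f j)`: sort by decreasing
weight, so that every pair of candidates costs the smaller of its two weights once. Hence
`G_A = ∑ q + ∑_i q_i d_A(i)`, where `d_A(i)` counts the indices `j < i` on the same side as `i`.
Summation by parts turns `∑_i q_i d_A(i)` into a combination, with positive coefficients
`q_k - q_(k+1)`, of the numbers `C(a, 2) + C(k - a, 2)` of same-side pairs among the first `k`
indices, `a` of which lie in `A`. Each of these is minimal exactly when `a = ⌊k/2⌋` or
`a = ⌈k/2⌉`, and the sets balanced in this sense on every prefix are exactly the C-partitions.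
-/

namespace Nat

theorem choose_two_add_choose_two_sub {a b c d : ℕ} (h : a + b = c + d) :
    ((c.choose 2 + d.choose 2 : ℕ) : ℝ) - (a.choose 2 + b.choose 2 : ℕ) = (c - a) * (c - b) := by
  have hd : (d : ℝ) = a + b - c := by
    have : ((a + b : ℕ) : ℝ) = (c + d : ℕ) := congrArg _ h
    push_cast at this; linarith
  push_cast [cast_choose_two, hd]
  ring

theorem choose_two_add_choose_two_le {a b c d : ℕ} (h : a + b = c + d) (hab : a ≤ b + 1)
    (hba : b ≤ a + 1) : a.choose 2 + b.choose 2 ≤ c.choose 2 + d.choose 2 := by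
  have key := choose_two_add_choose_two_sub h
  have : (0 : ℝ) ≤ (c - a) * (c - b) := by
    rcases (by omega : (c ≤ a ∧ c ≤ b) ∨ (a ≤ c ∧ b ≤ c)) with ⟨h1, h2⟩ | ⟨h1, h2⟩
    · exact mul_nonneg_of_nonpos_of_nonpos (by simpa using h1) (by simpa using h2)
    · exact mul_nonneg (by simpa using h1) (by simpa using h2)
  exact_mod_cast (sub_nonneg.1 (key ▸ this))

theorem choose_two_add_choose_two_eq_iff {a b c d : ℕ} (h : a + b = c + d) (hab : a ≤ b + 1)
    (hba : b ≤ a + 1) :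
    a.choose 2 + b.choose 2 = c.choose 2 + d.choose 2 ↔ c ≤ d + 1 ∧ d ≤ c + 1 := by
  have key := choose_two_add_choose_two_sub h
  rw [← @Nat.cast_inj ℝ, ← sub_eq_zero, ← neg_eq_zero, neg_sub, key, _root_.mul_eq_zero,
    sub_eq_zero, sub_eq_zero, Nat.cast_inj, Nat.cast_inj]
  omega

variable (p : ℕ → Prop) [DecidablePred p]

def sameBefore (n : ℕ) : ℕ := #{m ∈ range n | p m ↔ p n}

theorem sameBefore_eq (n : ℕ) :
    sameBefore p n = if p n then count p n else n - count p n := by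
  rw [sameBefore, count_eq_card_filter_range]
  split_ifs with h
  · simp only [h, iff_true]
  · have := card_filter_add_card_filter_not (s := range n) p
    rw [card_range] at this
    simp only [h, iff_false]
    exact (Nat.sub_eq_of_eq_add' this.symm).symm

theorem sum_range_sameBefore (k : ℕ) :
    ∑ n ∈ range k, sameBefore p n = (count p k).choose 2 + (k - count p k).choose 2 := by
  induction k with
  | zero => simp
  | succ k ih =>
    have hle : count p k ≤ k := count_le p
    rw [sum_range_succ, ih, sameBefore_eq, count_succ]
    split_ifs with h
    · rw [show k + 1 - (count p k + 1) = k - count p k by omega, choose_succ_succ',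
        choose_one_right]
      ring
    · rw [add_zero, show k + 1 - count p k = k - count p k + 1 by omega, choose_succ_succ',
        choose_one_right]
      ring

def Balanced (k : ℕ) : Prop := k ≤ 2 * count p k + 1 ∧ 2 * count p k ≤ k + 1

variable {p}

theorem sum_range_sameBefore_le {p' : ℕ → Prop} [DecidablePred p'] {k : ℕ}
    (h' : Balanced p' k) :
    ∑ n ∈ range k, sameBefore p' n ≤ ∑ n ∈ range k, sameBefore p n := by
  rw [sum_range_sameBefore, sum_range_sameBefore]
  have := count_le p (n := k); have := count_le p' (n := k)
  unfold Balanced at h'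
  exact choose_two_add_choose_two_le (by omega) (by omega) (by omega)

theorem sum_range_sameBefore_eq_iff {p' : ℕ → Prop} [DecidablePred p'] {k : ℕ}
    (h' : Balanced p' k) :
    ∑ n ∈ range k, sameBefore p' n = ∑ n ∈ range k, sameBefore p n ↔ Balanced p k := by
  rw [sum_range_sameBefore, sum_range_sameBefore]
  have := count_le p (n := k); have := count_le p' (n := k)
  unfold Balanced at h' ⊢
  rw [choose_two_add_choose_two_eq_iff (by omega) (by omega) (by omega)]
  omega

theorem forall_balanced_iff {N : ℕ} :
    (∀ k ≤ N, Balanced p k) ↔ ∀ i, 2 * i + 1 < N → (p (2 * i) ↔ ¬p (2 * i + 1)) := by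
  have hstep (i : ℕ) : count p (2 * i + 2) = count p (2 * i)
      + ((if p (2 * i) then 1 else 0) + if p (2 * i + 1) then 1 else 0) := by
    rw [count_succ, count_succ]; ring
  constructor
  · intro h i hi
    have h0 := h (2 * i) (by omega)
    have h2 := h (2 * i + 2) (by omega)
    unfold Balanced at h0 h2
    rw [hstep] at h2
    split_ifs at h2 <;> simp_all <;> omega
  · intro h
    have heven (i : ℕ) (hi : 2 * i ≤ N) : count p (2 * i) = i := by
      induction i with
      | zero => simp
      | succ i ih =>
        rw [mul_add, mul_one, hstep, ih (by omega)]
        have := h i (by omega)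
        split_ifs <;> simp_all
    intro k hk
    unfold Balanced
    obtain ⟨i, rfl | rfl⟩ := even_or_odd' k
    · rw [heven i hk]; omega
    · rw [count_succ, heven i (by omega)]; split_ifs <;> omega

end Nat

section SummationByParts

variable {R : Type*} [CommRing R] (w e : ℕ → R)

theorem sum_range_mul_eq_sum_range_sub_mul (n : ℕ) :
    ∑ i ∈ range n, w i * e i = ∑ i ∈ range n, (w i - w (i + 1)) * ∑ j ∈ range (i + 1), e j
      + w n * ∑ j ∈ range n, e j := by
  induction n with
  | zero => simp
  | succ n ih =>
    rw [sum_range_succ, ih, sum_range_succ, sum_range_succ e n]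
    ring

variable [LinearOrder R] [IsStrictOrderedRing R] {w e} {n : ℕ}

theorem sum_range_mul_nonneg (hw : ∀ i < n, w (i + 1) ≤ w i) (hwn : 0 ≤ w n)
    (he : ∀ k ≤ n, 0 ≤ ∑ j ∈ range k, e j) : 0 ≤ ∑ i ∈ range n, w i * e i := by
  rw [sum_range_mul_eq_sum_range_sub_mul]
  refine add_nonneg (sum_nonneg fun i hi => mul_nonneg ?_ (he _ ?_)) (mul_nonneg hwn (he n le_rfl))
  · exact sub_nonneg.2 (hw i (mem_range.1 hi))
  · exact mem_range.1 hi

theorem sum_range_mul_eq_zero_iff (hw : ∀ i < n, w (i + 1) < w i) (hwn : 0 ≤ w n)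
    (he : ∀ k ≤ n, 0 ≤ ∑ j ∈ range k, e j) :
    ∑ i ∈ range n, w i * e i = 0 ↔ ∀ k ≤ n, ∑ j ∈ range k, e j = 0 := by
  have hterm : ∀ i ∈ range n, 0 ≤ (w i - w (i + 1)) * ∑ j ∈ range (i + 1), e j :=
    fun i hi => mul_nonneg (sub_nonneg.2 (hw i (mem_range.1 hi)).le) (he _ (mem_range.1 hi))
  have hlast : 0 ≤ w n * ∑ j ∈ range n, e j := mul_nonneg hwn (he n le_rfl)
  rw [sum_range_mul_eq_sum_range_sub_mul, add_eq_zero_iff_of_nonneg (sum_nonneg hterm) hlast,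
    sum_eq_zero_iff_of_nonneg hterm]
  constructor
  · rintro ⟨h, -⟩ k hk
    obtain _ | k := k
    · simp
    · have := h k (mem_range.2 hk)
      exact (mul_eq_zero.1 this).resolve_left (sub_ne_zero.2 (hw k hk).ne')
  · intro h
    exact ⟨fun i hi => by rw [h _ (mem_range.1 hi), mul_zero], by rw [h n le_rfl, mul_zero]⟩

end SummationByParts

namespace Nat

variable {p p' : ℕ → Prop} [DecidablePred p] [DecidablePred p'] {w : ℕ → ℝ} {n : ℕ}

theorem sum_mul_sameBefore_le (hw : ∀ i < n, w (i + 1) ≤ w i) (hwn : 0 ≤ w n)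
    (h' : ∀ k ≤ n, Balanced p' k) :
    ∑ i ∈ range n, w i * sameBefore p' i ≤ ∑ i ∈ range n, w i * sameBefore p i := by
  rw [← sub_nonneg, ← sum_sub_distrib]
  simp only [← mul_sub]
  refine sum_range_mul_nonneg hw hwn fun k hk => ?_
  rw [sum_sub_distrib, sub_nonneg]
  exact_mod_cast sum_range_sameBefore_le (h' k hk)

theorem sum_mul_sameBefore_eq_iff (hw : ∀ i < n, w (i + 1) < w i) (hwn : 0 ≤ w n)
    (h' : ∀ k ≤ n, Balanced p' k) :
    ∑ i ∈ range n, w i * sameBefore p' i = ∑ i ∈ range n, w i * sameBefore p i ↔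
      ∀ k ≤ n, Balanced p k := by
  rw [eq_comm, ← sub_eq_zero, ← sum_sub_distrib]
  simp only [← mul_sub]
  rw [sum_range_mul_eq_zero_iff hw hwn fun k hk => ?_]
  · refine forall₂_congr fun k hk => ?_
    rw [sum_sub_distrib, sub_eq_zero, eq_comm, ← sum_range_sameBefore_eq_iff (h' k hk)]
    exact_mod_cast Iff.rfl
  · rw [sum_sub_distrib, sub_nonneg]
    exact_mod_cast sum_range_sameBefore_le (h' k hk)

end Nat

open Equiv

theorem guessA_eq_sum_guess (N : ℕ) (q : Fin N → ℝ) (p : ℝ) (A : Finset (Fin N)) :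
    guessA N q p A =
      ∑ y : Bool, guess N (fun i => q i * if (i ∈ A ↔ y = true) then 1 - p else p) := by
  simp only [guessA, guess, mul_assoc]

section PairSums

variable {ι α : Type*} [Fintype ι] [LinearOrder α] {g : ι → ι → ℝ}

theorem two_mul_sum_filter_lt [DecidableEq ι] (hg : ∀ i j, g i j = g j i) {π : ι → α}
    (hπ : Function.Injective π) :
    2 * ∑ i, ∑ j with π j < π i, g i j = ∑ i, ∑ j with j ≠ i, g i j := by
  have hswap : ∑ i, ∑ j with π j < π i, g i j = ∑ i, ∑ j with π i < π j, g i j := by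
    simp only [sum_filter]; rw [sum_comm]; simp only [hg]
  rw [two_mul]; nth_rw 2 [hswap]
  rw [← sum_add_distrib]
  refine sum_congr rfl fun i _ => ?_
  rw [← sum_union (disjoint_filter.2 fun j _ h h' => lt_asymm h h')]
  congr 1; ext j; simp [hπ.ne_iff, lt_or_lt_iff_ne]

theorem sum_filter_lt_comp_eq [LinearOrder ι] (hg : ∀ i j, g i j = g j i) {π : ι → α}
    (hπ : Function.Injective π) :
    ∑ i, ∑ j with π j < π i, g i j = ∑ i, ∑ j with j < i, g i j := by
  refine mul_left_cancel₀ two_ne_zero ((two_mul_sum_filter_lt hg hπ).trans ?_)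
  exact (two_mul_sum_filter_lt hg Function.injective_id).symm

end PairSums

variable {N : ℕ}

theorem sum_succ_mul_comp_perm (σ : Perm (Fin N)) (f : Fin N → ℝ) :
    ∑ k : Fin N, ((k : ℝ) + 1) * f (σ k) = ∑ i, f i + ∑ i, ∑ j with σ.symm j < σ.symm i, f i := by
  rw [← σ.symm.sum_comp, ← sum_add_distrib]
  refine sum_congr rfl fun i _ => ?_
  have hcard : #{j | σ.symm j < σ.symm i} = (σ.symm i : ℕ) := by
    rw [← Fin.card_Iio]
    exact card_equiv σ.symm (by simp)
  simp [sum_const, hcard]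
  ring

theorem sum_min_le_sum_succ_mul_comp_perm (f : Fin N → ℝ) (σ : Perm (Fin N)) :
    ∑ i, f i + ∑ i, ∑ j with j < i, min (f i) (f j) ≤ ∑ k : Fin N, ((k : ℝ) + 1) * f (σ k) := by
  rw [sum_succ_mul_comp_perm, ← sum_filter_lt_comp_eq (fun i j => min_comm _ _) σ.symm.injective]
  gcongr
  exact min_le_left _ _

theorem exists_sum_succ_mul_comp_perm_eq_sum_min (f : Fin N → ℝ) : ∃ σ : Perm (Fin N),
    ∑ k : Fin N, ((k : ℝ) + 1) * f (σ k) = ∑ i, f i + ∑ i, ∑ j with j < i, min (f i) (f j) := by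
  obtain ⟨σ, hσ⟩ : ∃ σ : Perm (Fin N), Monotone (OrderDual.toDual ∘ f ∘ σ) :=
    ⟨_, Tuple.monotone_sort _⟩
  have hanti : ∀ i j, σ.symm j < σ.symm i → f i ≤ f j := fun i j h => by
    simpa using hσ h.le
  refine ⟨σ, ?_⟩
  rw [sum_succ_mul_comp_perm, ← sum_filter_lt_comp_eq (fun i j => min_comm _ _) σ.symm.injective]
  congr 1
  refine sum_congr rfl fun i _ => sum_congr rfl fun j hj => ?_
  exact (min_eq_left (hanti i j (mem_filter.1 hj).2)).symm

theorem guess_eq_sum_add_sum_min (f : Fin N → ℝ) :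
    guess N f = ∑ i, f i + ∑ i, ∑ j with j < i, min (f i) (f j) := by
  obtain ⟨σ, hσ⟩ := exists_sum_succ_mul_comp_perm_eq_sum_min f
  exact le_antisymm (hσ ▸ inf'_le _ (mem_univ σ))
    (le_inf' _ _ fun σ _ => sum_min_le_sum_succ_mul_comp_perm f σ)

theorem card_filter_lt_eq_sameBefore (A : Finset (Fin N)) (i : Fin N) :
    #{j | j < i ∧ (j ∈ A ↔ i ∈ A)} = Nat.sameBefore (· ∈ A.map Fin.valEmbedding) i := by
  rw [Nat.sameBefore, ← Nat.Iio_eq_range, ← Fin.map_valEmbedding_Iio, filter_map, card_map]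
  congr 1
  ext j
  simp [Fin.val_inj]

theorem guessA_zero_eq {q : Fin N → ℝ} (hq : ∀ i, 0 ≤ q i) (hanti : Antitone q)
    (A : Finset (Fin N)) :
    guessA N q 0 A = ∑ i, q i + ∑ i, q i * Nat.sameBefore (· ∈ A.map Fin.valEmbedding) i := by
  rw [guessA_eq_sum_guess, Fintype.sum_bool, guess_eq_sum_add_sum_min, guess_eq_sum_add_sum_min,
    add_add_add_comm, ← sum_add_distrib, ← sum_add_distrib]
  congr 1
  · refine sum_congr rfl fun i _ => ?_
    by_cases hi : i ∈ A <;> simp [hi]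
  · refine sum_congr rfl fun i _ => ?_
    rw [← sum_add_distrib, ← card_filter_lt_eq_sameBefore]
    conv_rhs => rw [mul_comm, ← nsmul_eq_mul, ← sum_const, ← filter_filter, sum_filter]
    refine sum_congr rfl fun j hj => ?_
    have hji : min (q i) (q j) = q i := min_eq_left (hanti (mem_filter.1 hj).2.le)
    by_cases hi : i ∈ A <;> by_cases hj : j ∈ A <;> simp [hi, hj, hji, hq]

theorem sum_univ_mul_eq_sum_range_extend (q : Fin N → ℝ) (g : ℕ → ℝ) :
    ∑ i : Fin N, q i * g i = ∑ n ∈ range N, Function.extend Fin.val q 0 n * g n := by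
  rw [← Fin.sum_univ_eq_sum_range]
  simp [Fin.val_injective.extend_apply]

theorem extend_val_succ_lt {q : Fin N → ℝ} (hpos : ∀ i, 0 < q i)
    (hstrict : ∀ i j : Fin N, i < j → q j < q i) {n : ℕ} (hn : n < N) :
    Function.extend Fin.val q 0 (n + 1) < Function.extend Fin.val q 0 n := by
  rw [show n = ((⟨n, hn⟩ : Fin N) : ℕ) from rfl, Fin.val_injective.extend_apply]
  by_cases h : n + 1 < N
  · rw [show n + 1 = ((⟨n + 1, h⟩ : Fin N) : ℕ) from rfl, Fin.val_injective.extend_apply]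
    exact hstrict _ _ (Fin.mk_lt_mk.2 n.lt_succ_self)
  · rw [Function.extend_apply' _ _ _ fun ⟨a, ha⟩ => h (ha ▸ a.2)]
    exact hpos _

theorem forall_balanced_iff_pairs (A : Finset (Fin N)) :
    (∀ k ≤ N, Nat.Balanced (· ∈ A.map Fin.valEmbedding) k) ↔
      ∀ i : ℕ, ∀ h1 : 2 * i < N, ∀ h2 : 2 * i + 1 < N,
        ((⟨2 * i, h1⟩ : Fin N) ∈ A ↔ (⟨2 * i + 1, h2⟩ : Fin N) ∉ A) := by
  rw [Nat.forall_balanced_iff]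
  have hmem {n : ℕ} (h : n < N) : n ∈ A.map Fin.valEmbedding ↔ (⟨n, h⟩ : Fin N) ∈ A :=
    mem_map' (a := ⟨n, h⟩) Fin.valEmbedding
  exact forall_congr' fun i => ⟨fun h h1 h2 => by simpa [hmem h1, hmem h2] using h h2,
    fun h h2 => by simpa [hmem h2, hmem (by omega : 2 * i < N)] using h (by omega) h2⟩

theorem stmt_6_general (N : ℕ) (q : Fin N → ℝ)
    (hpos : ∀ i, 0 < q i)
    (hstrict : ∀ i j : Fin N, i < j → q j < q i)
    (A : Finset (Fin N)) :
    guessA N q 0 A = guessOpt N q 0 ↔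
      ∀ i : ℕ, ∀ h1 : 2 * i < N, ∀ h2 : 2 * i + 1 < N,
        ((⟨2 * i, h1⟩ : Fin N) ∈ A ↔ (⟨2 * i + 1, h2⟩ : Fin N) ∉ A) := by
  set w := Function.extend Fin.val q 0
  have hanti : Antitone q := fun i j hij =>
    hij.eq_or_lt.elim (fun h => h ▸ le_rfl) fun h => (hstrict i j h).le
  have hw (n : ℕ) (hn : n < N) : w (n + 1) < w n := extend_val_succ_lt hpos hstrict hn
  have hwN : 0 ≤ w N := (Function.extend_apply' (f := Fin.val) q 0 N fun ⟨a, ha⟩ => a.2.ne ha).ge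
  have hG (B : Finset (Fin N)) : guessA N q 0 B =
      ∑ i, q i + ∑ n ∈ range N, w n * Nat.sameBefore (· ∈ B.map Fin.valEmbedding) n := by
    rw [guessA_zero_eq (fun i => (hpos i).le) hanti,
      sum_univ_mul_eq_sum_range_extend q fun n => (Nat.sameBefore _ n : ℝ)]
  have hZ := (forall_balanced_iff_pairs (zigzag N)).2 fun i _ _ => by simp [zigzag, Nat.add_mod]
  have hopt : guessOpt N q 0 = guessA N q 0 (zigzag N) :=
    le_antisymm (inf'_le _ (mem_univ _)) <| le_inf' _ _ fun B _ => by
      rw [hG, hG]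
      exact add_le_add le_rfl (Nat.sum_mul_sameBefore_le (fun n hn => (hw n hn).le) hwN hZ)
  rw [hopt, hG, hG, add_right_inj, eq_comm, Nat.sum_mul_sameBefore_eq_iff hw hwN hZ,
    forall_balanced_iff_pairs]

theorem stmt_6 (N : ℕ) (hN : 1 ≤ N) (hNe : Even N) (q : Fin N → ℝ)
    (hpos : ∀ i, 0 < q i) (hsum : ∑ i, q i = 1)
    (hstrict : ∀ i j : Fin N, i < j → q j < q i)
    (A : Finset (Fin N)) :
    guessA N q 0 A = guessOpt N q 0 ↔
      ∀ i : ℕ, ∀ h1 : 2 * i < N, ∀ h2 : 2 * i + 1 < N,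
        ((⟨2 * i, h1⟩ : Fin N) ∈ A ↔ (⟨2 * i + 1, h2⟩ : Fin N) ∉ A) :=
  stmt_6_general N q hpos hstrict A
end

section
/- For every sorted probability distribution p_1 ≥ ⋯ ≥ p_N ≥ 0 and every 0 ≤ p ≤ 1/2, the maximum cut weight of G_X is at most a quarter of the total weight: MAXCUT(G_X) ≤ (1/4)·(Σ_{i≠j} w_{i,j} + Σ_{i=1}^N (1−2p)·p_i). -/
/-!
The weight `wt N q p i j` is the length of the intersection of the intervals
`(p q_i, (1 - p) q_i]` and `(p q_j, (1 - p) q_j]`, so the weight matrix is a Gram matrix of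
indicator functions in `L²(ℝ)` and hence positive semidefinite. Testing it against the `±1`
vector of a cut `A` gives `0 ≤ ∑ᵢⱼ wᵢⱼ - 4 · cut A`, and the diagonal `wᵢᵢ = (1 - 2p) qᵢ`
accounts for the second sum in the bound.
-/

open Finset

open MeasureTheory

theorem sum_mul_mul_measureReal_inter_nonneg {α ι : Type*} [MeasurableSpace α] [Fintype ι]
    (μ : Measure α) {s : ι → Set α} (hs : ∀ i, MeasurableSet (s i)) (hfin : ∀ i, μ (s i) ≠ ⊤)
    (c : ι → ℝ) : 0 ≤ ∑ i, ∑ j, c i * c j * μ.real (s i ∩ s j) := by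
  have hint : ∀ i j, Integrable (fun x => c i * c j * (s i ∩ s j).indicator (1 : α → ℝ) x) μ :=
    fun i j => ((integrable_indicator_iff ((hs i).inter (hs j))).2 <|
      integrableOn_const (measure_ne_top_of_subset Set.inter_subset_left (hfin i))).const_mul _
  have hsq : ∀ x, (∑ i, c i * (s i).indicator (1 : α → ℝ) x) ^ 2 =
      ∑ i, ∑ j, c i * c j * (s i ∩ s j).indicator 1 x := fun x => by
    simp only [sq, Finset.sum_mul_sum, Set.inter_indicator_one, Pi.mul_apply]
    exact Finset.sum_congr rfl fun i _ => Finset.sum_congr rfl fun j _ => by ring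
  have hexpand : ∑ i, ∑ j, c i * c j * μ.real (s i ∩ s j) =
      ∫ x, (∑ i, c i * (s i).indicator 1 x) ^ 2 ∂μ := by
    simp_rw [hsq]
    rw [integral_finsetSum _ fun i _ => integrable_finsetSum _ fun j _ => hint i j]
    refine Finset.sum_congr rfl fun i _ => ?_
    rw [integral_finsetSum _ fun j _ => hint i j]
    refine Finset.sum_congr rfl fun j _ => ?_
    rw [integral_const_mul, integral_indicator_one ((hs i).inter (hs j))]
  exact hexpand ▸ integral_nonneg fun x => sq_nonneg _

theorem four_mul_sum_sum_compl_le_sum_sum {ι : Type*} [Fintype ι] [DecidableEq ι]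
    {W : ι → ι → ℝ} (hsymm : ∀ i j, W i j = W j i)
    (hpsd : ∀ c : ι → ℝ, 0 ≤ ∑ i, ∑ j, c i * c j * W i j) (A : Finset ι) :
    4 * ∑ i ∈ A, ∑ j ∈ Aᶜ, W i j ≤ ∑ i, ∑ j, W i j := by
  set c : ι → ℝ := fun i => if i ∈ A then 1 else -1
  have hc : ∀ i j, c i * c j * W i j = W i j
      - 2 * (if i ∈ A then if j ∈ Aᶜ then W i j else 0 else 0)
      - 2 * (if i ∈ Aᶜ then if j ∈ A then W i j else 0 else 0) := fun i j => by
    simp only [c, Finset.mem_compl]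
    split_ifs <;> ring
  have hcross : ∑ i ∈ Aᶜ, ∑ j ∈ A, W i j = ∑ i ∈ A, ∑ j ∈ Aᶜ, W i j := by
    rw [Finset.sum_comm]
    simp_rw [hsymm _ (_ : ι)]
  have hquad := hpsd c
  simp only [hc, Finset.sum_sub_distrib, ← Finset.mul_sum, Finset.sum_ite_irrel,
    Finset.sum_const_zero, Finset.sum_ite_mem, Finset.univ_inter] at hquad
  linarith

theorem wt_comm (N : ℕ) (q : Fin N → ℝ) (p : ℝ) (i j : Fin N) : wt N q p i j = wt N q p j i := by
  simp only [wt, min_comm, max_comm]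

theorem wt_self (N : ℕ) {q : Fin N → ℝ} {p : ℝ} (hp : p ≤ 1 / 2) {i : Fin N} (hi : 0 ≤ q i) :
    wt N q p i i = (1 - 2 * p) * q i := by
  rw [wt, min_self, max_self, max_eq_right (by nlinarith)]
  ring

theorem wt_eq_measureReal_inter (N : ℕ) (q : Fin N → ℝ) {p : ℝ} (hp0 : 0 ≤ p) (hp1 : p ≤ 1)
    (i j : Fin N) :
    wt N q p i j = volume.real
      (Set.Ioc (p * q i) ((1 - p) * q i) ∩ Set.Ioc (p * q j) ((1 - p) * q j)) := by
  rw [Set.Ioc_inter_Ioc, Real.volume_real_Ioc, ← mul_min_of_nonneg _ _ (by linarith),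
    ← mul_max_of_nonneg _ _ hp0, wt, max_comm]

theorem stmt_16_general (N : ℕ) (q : Fin N → ℝ)
    (hnn : ∀ i, 0 ≤ q i)
    (p : ℝ) (hp0 : 0 ≤ p) (hp : p ≤ 1 / 2) :
    maxcut N q p ≤
      (1 / 4) * ((∑ i : Fin N, ∑ j ∈ Finset.univ.erase i, wt N q p i j) +
        ∑ i : Fin N, (1 - 2 * p) * q i) := by
  have htotal : (∑ i : Fin N, ∑ j ∈ Finset.univ.erase i, wt N q p i j) +
      ∑ i : Fin N, (1 - 2 * p) * q i = ∑ i, ∑ j, wt N q p i j := by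
    rw [← Finset.sum_add_distrib]
    refine Finset.sum_congr rfl fun i _ => ?_
    rw [← wt_self N hp (hnn i), Finset.sum_erase_add _ _ (Finset.mem_univ i)]
  have hpsd (c : Fin N → ℝ) : 0 ≤ ∑ i, ∑ j, c i * c j * wt N q p i j := by
    simp only [wt_eq_measureReal_inter N q hp0 (by linarith : p ≤ 1)]
    exact sum_mul_mul_measureReal_inter_nonneg volume (fun _ => measurableSet_Ioc)
      (fun _ => measure_Ioc_lt_top.ne) c
  rw [htotal, maxcut]
  refine Finset.sup'_le _ _ fun A _ => ?_
  have hcut := four_mul_sum_sum_compl_le_sum_sum (wt_comm N q p) hpsd A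
  rw [cut]
  linarith

theorem stmt_16 (N : ℕ) (hN : 1 ≤ N) (q : Fin N → ℝ)
    (hnn : ∀ i, 0 ≤ q i) (hsum : ∑ i, q i = 1)
    (hsort : ∀ i j : Fin N, i ≤ j → q j ≤ q i)
    (p : ℝ) (hp0 : 0 ≤ p) (hp : p ≤ 1 / 2) :
    maxcut N q p ≤
      (1 / 4) * ((∑ i : Fin N, ∑ j ∈ Finset.univ.erase i, wt N q p i j) +
        ∑ i : Fin N, (1 - 2 * p) * q i) :=
  stmt_16_general N q hnn p hp0 hp
end

section
/- For every sorted probability distribution p_1 ≥ ⋯ ≥ p_N ≥ 0 and every 0 ≤ p ≤ 1/2, the zigzag cut is within (1−2p)/4 of the maximum cut: CUT_ZZ(G_X) ≥ MAXCUT(G_X) − (1/4)·(1−2p), where CUT_ZZ is the cut weight of the zigzag partition A_ZZ = {k : k odd}. -/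
/-! The weight `w i j` is the length of the overlap of the intervals
`I k = (p q k, (1 - p) q k)`, so every cut is the integral over `t` of
`#(A ∩ S t) * #(Aᶜ ∩ S t)` with `S t = {k | t ∈ I k}`. As `q` is sorted, both endpoints of
`I k` decrease with `k`, so each `S t` is a run of consecutive indices; the zigzag partition
splits every such run into halves whose sizes differ by at most one, which maximises the
product. Hence the zigzag cut is the maximum cut, and `(1 - 2p)/4 ≥ 0`. -/

open Finset

open MeasureTheory

lemma card_filter_mod_two_eq_zero_Icc (a b : ℕ) :
    #{k ∈ Icc a b | k % 2 = 0} = b / 2 + 1 - (a + 1) / 2 := by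
  have : {k ∈ Icc a b | k % 2 = 0} = (Icc ((a + 1) / 2) (b / 2)).image (2 * ·) := by
    ext k
    simp only [mem_filter, mem_Icc, mem_image]
    constructor
    · rintro ⟨⟨hak, hkb⟩, hk⟩
      exact ⟨k / 2, ⟨by omega, by omega⟩, by omega⟩
    · rintro ⟨i, ⟨hai, hib⟩, rfl⟩
      omega
  rw [this, card_image_of_injective _ (fun x y h => by omega), Nat.card_Icc]

lemma Finset.eq_Icc_of_ordConnected {α : Type*} [LinearOrder α] [LocallyFiniteOrder α]
    {S : Finset α} (hS : (S : Set α).OrdConnected) (hne : S.Nonempty) :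
    S = Icc (S.min' hne) (S.max' hne) := by
  ext k
  refine ⟨fun hk => mem_Icc.2 ⟨S.min'_le k hk, S.le_max' k hk⟩, fun hk => ?_⟩
  exact_mod_cast hS.out (S.min'_mem hne) (S.max'_mem hne) (by simpa using hk)

lemma card_inter_zigzag_bounds_of_ordConnected {N : ℕ} {S : Finset (Fin N)}
    (hS : (S : Set (Fin N)).OrdConnected) :
    #S ≤ 2 * #(S ∩ zigzag N) + 1 ∧ 2 * #(S ∩ zigzag N) ≤ #S + 1 := by
  rcases S.eq_empty_or_nonempty with rfl | hne
  · simp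
  have hval : S.map Fin.valEmbedding = Icc (S.min' hne : ℕ) (S.max' hne) := by
    rw [← Fin.map_valEmbedding_Icc, ← Finset.eq_Icc_of_ordConnected hS hne]
  have hcard : #S = #(Icc (S.min' hne : ℕ) (S.max' hne)) := by rw [← hval, card_map]
  have heven : #(S ∩ zigzag N) = #{k ∈ Icc (S.min' hne : ℕ) (S.max' hne) | k % 2 = 0} := by
    rw [← hval, filter_map, card_map, zigzag, inter_filter, inter_univ]; rfl
  have hle : (S.min' hne : ℕ) ≤ S.max' hne := S.min'_le_max' hne
  rw [hcard, heven, card_filter_mod_two_eq_zero_Icc, Nat.card_Icc]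
  omega

lemma Nat.mul_le_mul_of_add_eq_of_balanced {a a' z z' : ℕ} (h : a + a' = z + z')
    (hz : z ≤ z' + 1) (hz' : z' ≤ z + 1) : a * a' ≤ z * z' := by
  -- `4 a a' = (a + a')² - (a - a')²`, and `(z - z')² ≤ 1`
  have : 4 * (a * a') ≤ 4 * (z * z') + 1 := by
    nlinarith [sq_nonneg ((a : ℤ) - a'), sq_nonneg ((z : ℤ) - z')]
  omega

lemma card_filter_add_card_filter_compl {α : Type*} [Fintype α] [DecidableEq α]
    (A : Finset α) (P : α → Prop) [DecidablePred P] :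
    #{i ∈ A | P i} + #{i ∈ Aᶜ | P i} = #{i | P i} := by
  rw [← card_union_of_disjoint (disjoint_filter_filter disjoint_compl_right), ← filter_union,
    union_compl]

open scoped Classical in
lemma card_filter_mul_card_filter_compl_le_zigzag {N : ℕ} (A : Finset (Fin N))
    {P : Fin N → Prop} (hP : {k | P k}.OrdConnected) :
    #{i ∈ A | P i} * #{i ∈ Aᶜ | P i} ≤
      #{i ∈ zigzag N | P i} * #{i ∈ (zigzag N)ᶜ | P i} := by
  have hA := card_filter_add_card_filter_compl A P
  have hZA := card_filter_add_card_filter_compl (zigzag N) P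
  set S : Finset (Fin N) := {i | P i}
  have hS : (S : Set (Fin N)).OrdConnected := by simpa [S] using hP
  have hZ : #{i ∈ zigzag N | P i} = #(S ∩ zigzag N) := by
    simp only [S, filter_inter, univ_inter]
  obtain ⟨h₁, h₂⟩ := card_inter_zigzag_bounds_of_ordConnected hS
  exact Nat.mul_le_mul_of_add_eq_of_balanced (hA.trans hZA.symm) (by omega) (by omega)

section Slicing

open scoped Classical

variable {α ι : Type*}

lemma natCast_card_filter_mul_card_filter_mem (s : ι → Set α) (A B : Finset ι) (x : α) :
    (#{i ∈ A | x ∈ s i} : ℝ) * #{j ∈ B | x ∈ s j} =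
      ∑ i ∈ A, ∑ j ∈ B, (s i ∩ s j).indicator 1 x := by
  simp only [natCast_card_filter, sum_mul_sum, Set.indicator_apply, Set.mem_inter_iff, ite_and,
    Pi.one_apply, ite_mul, one_mul, zero_mul]

variable [MeasurableSpace α] (μ : Measure α) {s : ι → Set α}

lemma integrable_indicator_one_inter (hs : ∀ i, MeasurableSet (s i))
    (hμ : ∀ i, μ (s i) ≠ ⊤) (i j : ι) :
    Integrable ((s i ∩ s j).indicator (1 : α → ℝ)) μ :=
  (integrableOn_const (measure_inter_lt_top_of_left_ne_top (hμ i)).ne).integrable_indicator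
    ((hs i).inter (hs j))

lemma integrable_card_filter_mul_card_filter_mem (hs : ∀ i, MeasurableSet (s i))
    (hμ : ∀ i, μ (s i) ≠ ⊤) (A B : Finset ι) :
    Integrable (fun x => (#{i ∈ A | x ∈ s i} : ℝ) * #{j ∈ B | x ∈ s j}) μ := by
  simp only [natCast_card_filter_mul_card_filter_mem]
  exact integrable_finsetSum _ fun i _ => integrable_finsetSum _ fun j _ =>
    integrable_indicator_one_inter μ hs hμ i j

lemma integral_card_filter_mul_card_filter_mem (hs : ∀ i, MeasurableSet (s i))
    (hμ : ∀ i, μ (s i) ≠ ⊤) (A B : Finset ι) :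
    ∫ x, (#{i ∈ A | x ∈ s i} : ℝ) * #{j ∈ B | x ∈ s j} ∂μ =
      ∑ i ∈ A, ∑ j ∈ B, μ.real (s i ∩ s j) := by
  simp only [natCast_card_filter_mul_card_filter_mem]
  rw [integral_finsetSum _ fun i _ => integrable_finsetSum _ fun j _ =>
    integrable_indicator_one_inter μ hs hμ i j]
  refine sum_congr rfl fun i _ => ?_
  rw [integral_finsetSum _ fun j _ => integrable_indicator_one_inter μ hs hμ i j]
  exact sum_congr rfl fun j _ => integral_indicator_one ((hs i).inter (hs j))

end Slicing

lemma ordConnected_setOf_mem_Ioo {β γ : Type*} [Preorder β] [Preorder γ] {a b : β → γ}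
    (ha : Antitone a) (hb : Antitone b) (x : γ) :
    {k | x ∈ Set.Ioo (a k) (b k)}.OrdConnected :=
  ⟨fun _ hi _ hj _ hk => ⟨(ha hk.1).trans_lt hi.1, hj.2.trans_le (hb hk.2)⟩⟩

open scoped Classical in
lemma sum_volume_real_Ioo_inter_le_zigzag {N : ℕ} {a b : Fin N → ℝ} (ha : Antitone a)
    (hb : Antitone b) (A : Finset (Fin N)) :
    ∑ i ∈ A, ∑ j ∈ Aᶜ, volume.real (Set.Ioo (a i) (b i) ∩ Set.Ioo (a j) (b j)) ≤
      ∑ i ∈ zigzag N, ∑ j ∈ (zigzag N)ᶜ,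
        volume.real (Set.Ioo (a i) (b i) ∩ Set.Ioo (a j) (b j)) := by
  have hs : ∀ k, MeasurableSet (Set.Ioo (a k) (b k)) := fun _ => measurableSet_Ioo
  have hμ : ∀ k, volume (Set.Ioo (a k) (b k)) ≠ ⊤ := fun _ => measure_Ioo_lt_top.ne
  rw [← integral_card_filter_mul_card_filter_mem _ hs hμ,
    ← integral_card_filter_mul_card_filter_mem _ hs hμ]
  refine integral_mono (integrable_card_filter_mul_card_filter_mem _ hs hμ _ _)
    (integrable_card_filter_mul_card_filter_mem _ hs hμ _ _) fun x => ?_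
  exact_mod_cast
    card_filter_mul_card_filter_compl_le_zigzag A (ordConnected_setOf_mem_Ioo ha hb x)

lemma wt_eq_volume_real_Ioo_inter {N : ℕ} (q : Fin N → ℝ) {p : ℝ} (hp₀ : 0 ≤ p)
    (hp₁ : p ≤ 1) (i j : Fin N) :
    wt N q p i j =
      volume.real (Set.Ioo (p * q i) ((1 - p) * q i) ∩ Set.Ioo (p * q j) ((1 - p) * q j)) := by
  rw [Set.Ioo_inter_Ioo, Real.volume_real_Ioo, wt, max_comm, ← mul_max_of_nonneg _ _ hp₀,
    ← mul_min_of_nonneg _ _ (sub_nonneg.2 hp₁)]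

lemma cut_le_cut_zigzag {N : ℕ} {q : Fin N → ℝ} (hq : Antitone q) {p : ℝ} (hp₀ : 0 ≤ p)
    (hp₁ : p ≤ 1) (A : Finset (Fin N)) : cut N q p A ≤ cut N q p (zigzag N) := by
  simp only [cut, wt_eq_volume_real_Ioo_inter q hp₀ hp₁]
  exact sum_volume_real_Ioo_inter_le_zigzag (hq.const_mul hp₀)
    (hq.const_mul (sub_nonneg.2 hp₁)) A

theorem stmt_17_general (N : ℕ) (q : Fin N → ℝ)
    (hsort : ∀ i j : Fin N, i ≤ j → q j ≤ q i)
    (p : ℝ) (hp0 : 0 ≤ p) (hp : p ≤ 1 / 2) :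
    maxcut N q p - (1 / 4) * (1 - 2 * p) ≤ cut N q p (zigzag N) := by
  have hmax : maxcut N q p ≤ cut N q p (zigzag N) :=
    sup'_le _ _ fun A _ => cut_le_cut_zigzag hsort hp0 (by linarith) A
  linarith

theorem stmt_17 (N : ℕ) (hN : 1 ≤ N) (q : Fin N → ℝ)
    (hnn : ∀ i, 0 ≤ q i) (hsum : ∑ i, q i = 1)
    (hsort : ∀ i j : Fin N, i ≤ j → q j ≤ q i)
    (p : ℝ) (hp0 : 0 ≤ p) (hp : p ≤ 1 / 2) :
    maxcut N q p - (1 / 4) * (1 - 2 * p) ≤ cut N q p (zigzag N) :=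
  stmt_17_general N q hsort p hp0 hp
end
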